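/- Let (λ(t), x(t), v(t)) be a continuously differentiable solution on [0,∞) of the accelerated primal-dual flow: θ(t)λ'(t) = A v(t) − b, x'(t) = v(t) − x(t), γ(t)v'(t) = μ_β(x(t) − v(t)) − ∇_x L_β(x(t), λ(t)), where θ(t) = θ₀ e^{−t} and γ(t) = μ_β + (γ₀ − μ_β)e^{−t} with θ₀, γ₀ > 0. Define E(t) = L_β(x(t), λ*) − L_β(x*, λ(t)) + (γ(t)/2)‖v(t) − x*‖² + (θ(t)/2)‖λ(t) − λ*‖². Then for all t ≥ 0, E(t) + (μ_β/2)∫₀ᵗ e^{s−t}‖x'(s)‖² ds ≤ e^{−t} E(0). -/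

import Mathlib

/-!
Lyapunov argument. Differentiating `E` along the flow, the coupling terms `⟪λ - λ*, A v - b⟫`
coming from the dual and the primal equation cancel, and what remains is
`⟪∇ₓ L_β(x, λ*), x* - x⟫` plus quadratic terms. Since `L_β(·, λ*)` is `μ_β`-strongly convex (the
penalty `(β/2)‖A x - b‖²` adds `β σ_min(A)²` to the modulus of `f`), this gives
`E + E' + (μ_β/2)‖x'‖² ≤ 0`, i.e. `e^t E(t) + (μ_β/2) ∫₀ᵗ e^s ‖x'(s)‖² ds` is nonincreasing.
-/

open scoped RealInnerProductSpace

/-- The smallest singular value of a linear map between Euclidean spaces. -/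
noncomputable def sigmaMin {n m : ℕ}
    (A : EuclideanSpace ℝ (Fin n) →L[ℝ] EuclideanSpace ℝ (Fin m)) : ℝ :=
  sInf {c : ℝ | ∃ x : EuclideanSpace ℝ (Fin n), ‖x‖ = 1 ∧ ‖A x‖ = c}

section SigmaMin

variable {n m : ℕ} (A : EuclideanSpace ℝ (Fin n) →L[ℝ] EuclideanSpace ℝ (Fin m))

lemma sigmaMin_nonneg : 0 ≤ sigmaMin A :=
  Real.sInf_nonneg (by rintro c ⟨u, -, rfl⟩; positivity)

lemma sigmaMin_mul_norm_le (u : EuclideanSpace ℝ (Fin n)) : sigmaMin A * ‖u‖ ≤ ‖A u‖ := by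
  rcases eq_or_ne u 0 with rfl | hu
  · simp
  have hu' : 0 < ‖u‖ := norm_pos_iff.mpr hu
  have hunit : sigmaMin A ≤ ‖A (‖u‖⁻¹ • u)‖ :=
    csInf_le ⟨0, by rintro c ⟨w, -, rfl⟩; positivity⟩
      ⟨‖u‖⁻¹ • u, by rw [norm_smul, norm_inv, norm_norm, inv_mul_cancel₀ hu'.ne'], rfl⟩
  rw [map_smul, norm_smul, norm_inv, norm_norm, inv_mul_eq_div, le_div_iff₀ hu'] at hunit
  exact hunit

lemma sigmaMin_sq_mul_norm_sq_le (u : EuclideanSpace ℝ (Fin n)) :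
    sigmaMin A ^ 2 * ‖u‖ ^ 2 ≤ ‖A u‖ ^ 2 := by
  rw [← mul_pow]
  exact pow_le_pow_left₀ (mul_nonneg (sigmaMin_nonneg A) (norm_nonneg u))
    (sigmaMin_mul_norm_le A u) 2

end SigmaMin

open Real in
theorem add_integral_exp_mul_le_exp_neg_mul {u u' g : ℝ → ℝ}
    (hu : ∀ t, 0 ≤ t → HasDerivAt u (u' t) t) (hg : Continuous g)
    (hle : ∀ t, 0 ≤ t → u t + u' t + g t ≤ 0) {t : ℝ} (ht : 0 ≤ t) :
    u t + ∫ s in (0:ℝ)..t, exp (s - t) * g s ≤ exp (-t) * u 0 := by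
  set φ : ℝ → ℝ := fun s => exp s * u s + ∫ r in (0:ℝ)..s, exp r * g r
  have hφ : ∀ s, 0 ≤ s → HasDerivAt φ (exp s * (u s + u' s + g s)) s := fun s hs => by
    refine (((hasDerivAt_exp s).mul (hu s hs)).add
      ((continuous_exp.mul hg).integral_hasStrictDerivAt 0 s).hasDerivAt).congr_deriv ?_
    simp only [Pi.mul_apply]
    ring
  have hanti : AntitoneOn φ (Set.Ici 0) := by
    refine antitoneOn_of_hasDerivWithinAt_nonpos (f' := fun s => exp s * (u s + u' s + g s))
      (convex_Ici 0)
      (fun s hs => (hφ s hs).continuousAt.continuousWithinAt) (fun s hs => ?_) (fun s hs => ?_)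
    all_goals rw [interior_Ici] at hs
    · exact (hφ s hs.le).hasDerivWithinAt
    · exact mul_nonpos_of_nonneg_of_nonpos (exp_pos s).le (hle s hs.le)
  have hφt : φ t ≤ u 0 := by
    simpa [φ] using hanti Set.self_mem_Ici ht ht
  have hint : ∫ s in (0:ℝ)..t, exp (s - t) * g s = exp (-t) * ∫ r in (0:ℝ)..t, exp r * g r := by
    rw [← intervalIntegral.integral_const_mul]
    congr 1 with s
    rw [sub_eq_neg_add, exp_add]
    ring
  calc u t + ∫ s in (0:ℝ)..t, exp (s - t) * g s = exp (-t) * φ t := by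
        rw [hint, mul_add, ← mul_assoc, ← exp_add, neg_add_cancel, exp_zero, one_mul]
    _ ≤ exp (-t) * u 0 := mul_le_mul_of_nonneg_left hφt (exp_pos _).le

section AugmentedLagrangian

open scoped InnerProduct

variable {E F : Type*} [NormedAddCommGroup E] [InnerProductSpace ℝ E]
  [NormedAddCommGroup F] [InnerProductSpace ℝ F]
  (f : E → ℝ) (gradf : E → E) (A : E →L[ℝ] F) (b : F) (β : ℝ)

noncomputable def augLagrangian (z : E) (w : F) : ℝ :=
  f z + β / 2 * ‖A z - b‖ ^ 2 + ⟪w, A z - b⟫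

noncomputable def flowEnergy (xs : E) (ls : F) (γ θ : ℝ) (x v : E) (lam : F) : ℝ :=
  augLagrangian f A b β x ls - augLagrangian f A b β xs lam
    + γ / 2 * ‖v - xs‖ ^ 2 + θ / 2 * ‖lam - ls‖ ^ 2

variable {f A b β}

lemma augLagrangian_of_feasible {z : E} (hz : A z = b) (w : F) :
    augLagrangian f A b β z w = f z := by
  simp [augLagrangian, hz]

variable (f A b β) [CompleteSpace E] [CompleteSpace F]

noncomputable def augLagrangianGrad (z : E) (w : F) : E :=
  gradf z + β • (A†) (A z - b) + (A†) w

variable {f gradf A b β}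

lemma inner_augLagrangianGrad (z u : E) (w : F) :
    ⟪augLagrangianGrad gradf A b β z w, u⟫ =
      ⟪gradf z, u⟫ + β * ⟪A z - b, A u⟫ + ⟪w, A u⟫ := by
  simp only [augLagrangianGrad, inner_add_left, real_inner_smul_left,
    ContinuousLinearMap.adjoint_inner_left]

lemma augLagrangianGrad_eq_add_adjoint (z : E) (w w' : F) :
    augLagrangianGrad gradf A b β z w = augLagrangianGrad gradf A b β z w' + (A†) (w - w') := by
  simp only [augLagrangianGrad, map_sub]
  abel

lemma hasDerivAt_augLagrangian_comp {x : ℝ → E} {x' : E} {t : ℝ}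
    (hgrad : HasGradientAt f (gradf (x t)) (x t)) (hx : HasDerivAt x x' t) (w : F) :
    HasDerivAt (fun s => augLagrangian f A b β (x s) w)
      ⟪augLagrangianGrad gradf A b β (x t) w, x'⟫ t := by
  have hAx : HasDerivAt (fun s => A (x s) - b) (A x') t :=
    (A.hasFDerivAt.comp_hasDerivAt t hx).sub_const b
  have hfx : HasDerivAt (fun s => f (x s)) ⟪gradf (x t), x'⟫ t := by
    simpa [Function.comp_def, InnerProductSpace.toDual_apply_apply] using
      hgrad.hasFDerivAt.comp_hasDerivAt t hx
  refine ((hfx.add (hAx.norm_sq.const_mul (β / 2))).add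
    ((hasDerivAt_const t w).inner ℝ hAx)).congr_deriv ?_
  rw [inner_augLagrangianGrad]
  simp only [inner_zero_left]
  ring

lemma augLagrangian_add_inner_grad_add_sq_le {μ σ : ℝ}
    (hconv : ∀ x y, f x + ⟪gradf x, y - x⟫ + μ / 2 * ‖y - x‖ ^ 2 ≤ f y)
    (hA : ∀ u, σ ^ 2 * ‖u‖ ^ 2 ≤ ‖A u‖ ^ 2) (hβ : 0 ≤ β) (w : F) (z y : E) :
    augLagrangian f A b β z w + ⟪augLagrangianGrad gradf A b β z w, y - z⟫
      + (μ + β * σ ^ 2) / 2 * ‖y - z‖ ^ 2 ≤ augLagrangian f A b β y w := by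
  have hsplit : A y - b = (A z - b) + A (y - z) := by rw [map_sub]; abel
  have hquad : ‖A y - b‖ ^ 2 = ‖A z - b‖ ^ 2 + 2 * ⟪A z - b, A (y - z)⟫ + ‖A (y - z)‖ ^ 2 := by
    rw [hsplit, norm_add_sq_real]
  have hlin : ⟪w, A y - b⟫ = ⟪w, A z - b⟫ + ⟪w, A (y - z)⟫ := by rw [hsplit, inner_add_right]
  unfold augLagrangian
  rw [inner_augLagrangianGrad, hquad, hlin]
  nlinarith [hconv z y, mul_le_mul_of_nonneg_left (hA (y - z)) hβ]

lemma hasDerivAt_flowEnergy {xs : E} {ls : F} {θ γ : ℝ → ℝ} {x v : ℝ → E} {lam : ℝ → F}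
    {θ' γ' : ℝ} {x' v' : E} {lam' : F} {t : ℝ}
    (hgrad : HasGradientAt f (gradf (x t)) (x t)) (hθ : HasDerivAt θ θ' t)
    (hγ : HasDerivAt γ γ' t) (hx : HasDerivAt x x' t) (hv : HasDerivAt v v' t)
    (hlam : HasDerivAt lam lam' t) :
    HasDerivAt (fun s => flowEnergy f A b β xs ls (γ s) (θ s) (x s) (v s) (lam s))
      (⟪augLagrangianGrad gradf A b β (x t) ls, x'⟫ - ⟪lam', A xs - b⟫
        + (γ' / 2 * ‖v t - xs‖ ^ 2 + γ t * ⟪v t - xs, v'⟫)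
        + (θ' / 2 * ‖lam t - ls‖ ^ 2 + θ t * ⟪lam t - ls, lam'⟫)) t := by
  have hdual : HasDerivAt (fun s => augLagrangian f A b β xs (lam s)) ⟪lam', A xs - b⟫ t := by
    refine ((hlam.inner ℝ (hasDerivAt_const t (A xs - b))).const_add
      (f xs + β / 2 * ‖A xs - b‖ ^ 2)).congr_deriv ?_
    simp only [inner_zero_right, zero_add]
  refine ((((hasDerivAt_augLagrangian_comp hgrad hx ls).sub hdual).add
    ((hγ.div_const 2).mul (hv.sub_const xs).norm_sq)).add
    ((hθ.div_const 2).mul (hlam.sub_const ls).norm_sq)).congr_deriv ?_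
  ring

lemma flowEnergy_add_deriv_le {κ θ γ : ℝ} {xs x v x' v' : E} {ls lam lam' : F}
    (hxs : A xs = b)
    (hsc : augLagrangian f A b β x ls + ⟪augLagrangianGrad gradf A b β x ls, xs - x⟫
      + κ / 2 * ‖xs - x‖ ^ 2 ≤ augLagrangian f A b β xs ls)
    (hlam : θ • lam' = A v - b) (hx : x' = v - x)
    (hv : γ • v' = κ • (x - v) - augLagrangianGrad gradf A b β x lam) :
    flowEnergy f A b β xs ls γ θ x v lam
      + (⟪augLagrangianGrad gradf A b β x ls, x'⟫ - ⟪lam', A xs - b⟫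
        + ((κ - γ) / 2 * ‖v - xs‖ ^ 2 + γ * ⟪v - xs, v'⟫)
        + (-θ / 2 * ‖lam - ls‖ ^ 2 + θ * ⟪lam - ls, lam'⟫))
      + κ / 2 * ‖x'‖ ^ 2 ≤ 0 := by
  subst hx
  set G := augLagrangianGrad gradf A b β x ls
  have hdual : θ * ⟪lam - ls, lam'⟫ = ⟪lam - ls, A v - b⟫ := by
    rw [← hlam, real_inner_smul_right]
  have hprimal : γ * ⟪v - xs, v'⟫ = κ * ⟪v - xs, x - v⟫ - ⟪G, v - xs⟫ - ⟪lam - ls, A v - b⟫ := by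
    rw [← real_inner_smul_right, hv, augLagrangianGrad_eq_add_adjoint x lam ls, inner_sub_right,
      real_inner_smul_right, inner_add_right, ContinuousLinearMap.adjoint_inner_right, map_sub,
      hxs, real_inner_comm G, real_inner_comm (A v - b)]
    ring
  have hpolar : κ * ⟪v - xs, x - v⟫ = κ / 2 * (‖x - xs‖ ^ 2 - ‖x - v‖ ^ 2 - ‖v - xs‖ ^ 2) := by
    rw [← sub_add_sub_cancel x v xs, norm_add_sq_real, real_inner_comm]
    ring
  have hG : ⟪G, v - x⟫ - ⟪G, v - xs⟫ = ⟪G, xs - x⟫ := by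
    rw [← inner_sub_right, sub_sub_sub_cancel_left]
  unfold flowEnergy
  rw [augLagrangian_of_feasible hxs] at hsc ⊢
  rw [norm_sub_rev xs x] at hsc
  rw [hxs, sub_self, inner_zero_right, norm_sub_rev v x]
  linarith

end AugmentedLagrangian

theorem apd_flow_exponential_decay_general {n m : ℕ}
    (f : EuclideanSpace ℝ (Fin n) → ℝ)
    (gradf : EuclideanSpace ℝ (Fin n) → EuclideanSpace ℝ (Fin n))
    (A : EuclideanSpace ℝ (Fin n) →L[ℝ] EuclideanSpace ℝ (Fin m))
    (b : EuclideanSpace ℝ (Fin m))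
    (μ L β θ₀ γ₀ μβ : ℝ)
    (hβ : 0 ≤ β)
    (hμβ : μβ = μ + β * sigmaMin A ^ 2)
    (hgrad : ∀ x, HasGradientAt f (gradf x) x)
    (hconv : ∀ x y, f x + ⟪gradf x, y - x⟫ + μ / 2 * ‖y - x‖ ^ 2 ≤ f y)
    (xs : EuclideanSpace ℝ (Fin n)) (ls : EuclideanSpace ℝ (Fin m))
    (hKKT1 : A xs = b)
    (lam : ℝ → EuclideanSpace ℝ (Fin m))
    (x v : ℝ → EuclideanSpace ℝ (Fin n))
    (lam' : ℝ → EuclideanSpace ℝ (Fin m))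
    (x' v' : ℝ → EuclideanSpace ℝ (Fin n))
    (hlamd : ∀ t, 0 ≤ t → HasDerivAt lam (lam' t) t)
    (hxd : ∀ t, 0 ≤ t → HasDerivAt x (x' t) t)
    (hvd : ∀ t, 0 ≤ t → HasDerivAt v (v' t) t)
    (hxc : Continuous x')
    (θ γ : ℝ → ℝ)
    (hθ : ∀ t, θ t = θ₀ * Real.exp (-t))
    (hγ : ∀ t, γ t = μβ + (γ₀ - μβ) * Real.exp (-t))
    (hode1 : ∀ t, 0 ≤ t → θ t • lam' t = A (v t) - b)
    (hode2 : ∀ t, 0 ≤ t → x' t = v t - x t)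
    (hode3 : ∀ t, 0 ≤ t → γ t • v' t =
      μβ • (x t - v t) -
        (gradf (x t) + β • (ContinuousLinearMap.adjoint A) (A (x t) - b)
          + (ContinuousLinearMap.adjoint A) (lam t)))
    (Lβ : EuclideanSpace ℝ (Fin n) → EuclideanSpace ℝ (Fin m) → ℝ)
    (hLβ : ∀ z w, Lβ z w = f z + β / 2 * ‖A z - b‖ ^ 2 + ⟪w, A z - b⟫)
    (Efun : ℝ → ℝ)
    (hE : ∀ t, Efun t = Lβ (x t) ls - Lβ xs (lam t)
      + γ t / 2 * ‖v t - xs‖ ^ 2 + θ t / 2 * ‖lam t - ls‖ ^ 2) :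
    ∀ t, 0 ≤ t →
      Efun t + μβ / 2 * ∫ s in (0:ℝ)..t, Real.exp (s - t) * ‖x' s‖ ^ 2 ≤
        Real.exp (-t) * Efun 0 := by
  obtain rfl : Lβ = augLagrangian f A b β := funext fun z => funext (hLβ z)
  obtain rfl : Efun = fun t => flowEnergy f A b β xs ls (γ t) (θ t) (x t) (v t) (lam t) :=
    funext hE
  have hθd : ∀ t, HasDerivAt θ (-θ t) t := fun t => by
    rw [funext hθ]
    simpa using ((hasDerivAt_neg t).exp.const_mul θ₀)
  have hγd : ∀ t, HasDerivAt γ (μβ - γ t) t := fun t => by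
    rw [funext hγ]
    simpa using ((hasDerivAt_neg t).exp.const_mul (γ₀ - μβ)).const_add μβ
  have hsc : ∀ z, augLagrangian f A b β z ls + ⟪augLagrangianGrad gradf A b β z ls, xs - z⟫
      + μβ / 2 * ‖xs - z‖ ^ 2 ≤ augLagrangian f A b β xs ls := fun z => by
    rw [hμβ]
    exact augLagrangian_add_inner_grad_add_sq_le hconv (sigmaMin_sq_mul_norm_sq_le A) hβ ls z xs
  intro t ht
  have hdecay := add_integral_exp_mul_le_exp_neg_mul (g := fun s => μβ / 2 * ‖x' s‖ ^ 2)
    (fun s hs => hasDerivAt_flowEnergy (hgrad (x s)) (hθd s) (hγd s) (hxd s hs) (hvd s hs)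
      (hlamd s hs))
    (continuous_const.mul (hxc.norm.pow 2))
    (fun s hs => flowEnergy_add_deriv_le hKKT1 (hsc (x s)) (hode1 s hs) (hode2 s hs) (hode3 s hs))
    ht
  simpa only [mul_left_comm (Real.exp _) (μβ / 2), intervalIntegral.integral_const_mul]
    using hdecay

/-- Lemma 2.1 (i): exponential decay inequality for the Lyapunov function of the
accelerated primal-dual flow. -/
theorem apd_flow_exponential_decay {n m : ℕ}
    (f : EuclideanSpace ℝ (Fin n) → ℝ)
    (gradf : EuclideanSpace ℝ (Fin n) → EuclideanSpace ℝ (Fin n))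
    (A : EuclideanSpace ℝ (Fin n) →L[ℝ] EuclideanSpace ℝ (Fin m))
    (b : EuclideanSpace ℝ (Fin m))
    (μ L β θ₀ γ₀ μβ : ℝ)
    (hμ : 0 ≤ μ) (hμL : μ ≤ L) (hβ : 0 ≤ β) (hθ₀ : 0 < θ₀) (hγ₀ : 0 < γ₀)
    (hμβ : μβ = μ + β * sigmaMin A ^ 2)
    (hgrad : ∀ x, HasGradientAt f (gradf x) x)
    (hconv : ∀ x y, f x + ⟪gradf x, y - x⟫ + μ / 2 * ‖y - x‖ ^ 2 ≤ f y)
    (hlip : ∀ x y, ⟪gradf x - gradf y, x - y⟫ ≤ L * ‖x - y‖ ^ 2)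
    (xs : EuclideanSpace ℝ (Fin n)) (ls : EuclideanSpace ℝ (Fin m))
    (hKKT1 : A xs = b)
    (hKKT2 : gradf xs + (ContinuousLinearMap.adjoint A) ls = 0)
    (lam : ℝ → EuclideanSpace ℝ (Fin m))
    (x v : ℝ → EuclideanSpace ℝ (Fin n))
    (lam' : ℝ → EuclideanSpace ℝ (Fin m))
    (x' v' : ℝ → EuclideanSpace ℝ (Fin n))
    (hlamd : ∀ t, 0 ≤ t → HasDerivAt lam (lam' t) t)
    (hxd : ∀ t, 0 ≤ t → HasDerivAt x (x' t) t)
    (hvd : ∀ t, 0 ≤ t → HasDerivAt v (v' t) t)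
    (hlamc : Continuous lam') (hxc : Continuous x') (hvc : Continuous v')
    (θ γ : ℝ → ℝ)
    (hθ : ∀ t, θ t = θ₀ * Real.exp (-t))
    (hγ : ∀ t, γ t = μβ + (γ₀ - μβ) * Real.exp (-t))
    (hode1 : ∀ t, 0 ≤ t → θ t • lam' t = A (v t) - b)
    (hode2 : ∀ t, 0 ≤ t → x' t = v t - x t)
    (hode3 : ∀ t, 0 ≤ t → γ t • v' t =
      μβ • (x t - v t) -
        (gradf (x t) + β • (ContinuousLinearMap.adjoint A) (A (x t) - b)
          + (ContinuousLinearMap.adjoint A) (lam t)))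
    (Lβ : EuclideanSpace ℝ (Fin n) → EuclideanSpace ℝ (Fin m) → ℝ)
    (hLβ : ∀ z w, Lβ z w = f z + β / 2 * ‖A z - b‖ ^ 2 + ⟪w, A z - b⟫)
    (Efun : ℝ → ℝ)
    (hE : ∀ t, Efun t = Lβ (x t) ls - Lβ xs (lam t)
      + γ t / 2 * ‖v t - xs‖ ^ 2 + θ t / 2 * ‖lam t - ls‖ ^ 2) :
    ∀ t, 0 ≤ t →
      Efun t + μβ / 2 * ∫ s in (0:ℝ)..t, Real.exp (s - t) * ‖x' s‖ ^ 2 ≤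
        Real.exp (-t) * Efun 0 :=
  apd_flow_exponential_decay_general f gradf A b μ L β θ₀ γ₀ μβ hβ hμβ hgrad hconv xs ls hKKT1 lam x
    v lam' x' v' hlamd hxd hvd hxc θ γ hθ hγ hode1 hode2 hode3 Lβ hLβ Efun hE
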